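/- Let A and B be n×n positive definite complex matrices. If A ≤ B in the Loewner order, then A^{-1} ◇ B ≥ I in the Loewner order, where A^{-1} ◇ B = [½I + ½(A # B)] A^{-1} [½I + ½(A # B)] is the Wasserstein mean of A^{-1} and B with parameter 1/2. -/

import Mathlib

open Matrix
open scoped ComplexOrder

/-- Real power of a matrix via functional calculus on the spectrum (junk value
if the matrix is not Hermitian). -/
noncomputable def mrpow {n : ℕ} (A : Matrix (Fin n) (Fin n) ℂ) (r : ℝ) :
    Matrix (Fin n) (Fin n) ℂ :=
  if hA : A.IsHermitian then
    (hA.eigenvectorUnitary : Matrix (Fin n) (Fin n) ℂ) *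
      diagonal (fun i => ((hA.eigenvalues i ^ r : ℝ) : ℂ)) *
      (star (hA.eigenvectorUnitary : Matrix (Fin n) (Fin n) ℂ))
  else A

/-- The metric geometric mean `A # B = A^{1/2} (A^{-1/2} B A^{-1/2})^{1/2} A^{1/2}`. -/
noncomputable def sharp {n : ℕ} (A B : Matrix (Fin n) (Fin n) ℂ) :
    Matrix (Fin n) (Fin n) ℂ :=
  mrpow A (1/2) * mrpow (mrpow A (-(1/2)) * B * mrpow A (-(1/2))) (1/2) * mrpow A (1/2)

/-- The Loewner order `A ≤ B`, i.e. `B - A` is positive semidefinite. -/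
def loewnerLE {n : ℕ} (A B : Matrix (Fin n) (Fin n) ℂ) : Prop := (B - A).PosSemidef

/-- The near-order `A ⪯ B`, i.e. `A⁻¹ # B ≥ I` in the Loewner order. -/
def nearLE {n : ℕ} (A B : Matrix (Fin n) (Fin n) ℂ) : Prop := loewnerLE 1 (sharp A⁻¹ B)

/-- The Wasserstein mean `A ◇ₜ B = [(1-t)I + t(A⁻¹ # B)] A [(1-t)I + t(A⁻¹ # B)]`. -/
noncomputable def wassersteinMean {n : ℕ} (t : ℝ) (A B : Matrix (Fin n) (Fin n) ℂ) :
    Matrix (Fin n) (Fin n) ℂ :=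
  ((1 - t) • (1 : Matrix (Fin n) (Fin n) ℂ) + t • sharp A⁻¹ B) * A *
    ((1 - t) • (1 : Matrix (Fin n) (Fin n) ℂ) + t • sharp A⁻¹ B)

/-!
Put `G = A # B` and `C = (I + G) / 2`. Conjugating `A ≤ B` by `A^{-1/2}` gives
`A^{-1/2} B A^{-1/2} ≥ I`, and the Löwner–Heinz inequality for the square root then yields
`G ≥ A`. Since `C² - G = (I - G)² / 4 ≥ 0`, also `C² ≥ A`; inversion is operator antitone, so
`A⁻¹ ≥ C⁻²`, and conjugating by `C` gives `C A⁻¹ C ≥ I`.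
-/

open CFC
open scoped MatrixOrder Matrix.Norms.L2Operator

section CStarAlgebra

variable {𝒜 : Type*} [CStarAlgebra 𝒜] [PartialOrder 𝒜] [StarOrderedRing 𝒜]

noncomputable def geomMean (a b : 𝒜) : 𝒜 :=
  a ^ (1 / 2 : ℝ) * (a ^ (-(1 / 2) : ℝ) * b * a ^ (-(1 / 2) : ℝ)) ^ (1 / 2 : ℝ) * a ^ (1 / 2 : ℝ)

lemma le_geomMean_of_le {a b : 𝒜} (ha : IsStrictlyPositive a) (hab : a ≤ b) :
    a ≤ geomMean a b := by
  have h_one_le : 1 ≤ a ^ (-(1 / 2) : ℝ) * b * a ^ (-(1 / 2) : ℝ) := by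
    rw [← conjugate_rpow_neg_one_half a]
    exact IsSelfAdjoint.conjugate_le_conjugate hab rpow_nonneg.isSelfAdjoint
  have h_one_le_sqrt : 1 ≤ (a ^ (-(1 / 2) : ℝ) * b * a ^ (-(1 / 2) : ℝ)) ^ (1 / 2 : ℝ) := by
    simpa only [one_rpow] using rpow_le_rpow (p := 1 / 2) ⟨by norm_num, by norm_num⟩ h_one_le
  calc a = a ^ (1 / 2 : ℝ) * 1 * a ^ (1 / 2 : ℝ) := by
        rw [mul_one, ← rpow_add ha.isUnit]
        norm_num
        exact (rpow_one a).symm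
    _ ≤ geomMean a b :=
        IsSelfAdjoint.conjugate_le_conjugate h_one_le_sqrt rpow_nonneg.isSelfAdjoint

lemma le_midpoint_one_mul_self {g : 𝒜} (hg : IsSelfAdjoint g) :
    g ≤ ((1 / 2 : ℝ) • (1 + g)) * ((1 / 2 : ℝ) • (1 + g)) := by
  have h_sq : ((1 / 2 : ℝ) • (1 + g)) * ((1 / 2 : ℝ) • (1 + g)) - g
      = (1 / 4 : ℝ) • (star (1 - g) * (1 - g)) := by
    rw [star_sub, star_one, hg.star_eq, smul_mul_smul_comm]
    simp only [smul_sub, smul_add, mul_add, add_mul, mul_sub, sub_mul, one_mul, mul_one]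
    module
  rw [← sub_nonneg, h_sq]
  exact smul_nonneg (by norm_num) (star_mul_self_nonneg _)

lemma one_le_mul_ringInverse_mul {a c : 𝒜} (ha : IsStrictlyPositive a)
    (hc : IsSelfAdjoint c) (hac : a ≤ c * c) : 1 ≤ c * Ring.inverse a * c := by
  have hc_unit : IsUnit c :=
    (isUnit_pow_iff two_ne_zero).mp (sq c ▸ CStarAlgebra.isUnit_of_le a hac)
  calc (1 : 𝒜) = c * Ring.inverse (c * c) * c := by
        lift c to 𝒜ˣ using hc_unit
        rw [← Units.val_mul, Ring.inverse_unit]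
        simp
    _ ≤ c * Ring.inverse a * c :=
        hc.conjugate_le_conjugate (CStarAlgebra.ringInverse_le_ringInverse hac)

lemma one_le_midpoint_mul_ringInverse_mul {a g : 𝒜} (ha : IsStrictlyPositive a) (hag : a ≤ g) :
    1 ≤ ((1 / 2 : ℝ) • (1 + g)) * Ring.inverse a * ((1 / 2 : ℝ) • (1 + g)) := by
  have hg : IsSelfAdjoint g := (ha.nonneg.trans hag).isSelfAdjoint
  exact one_le_mul_ringInverse_mul ha ((IsSelfAdjoint.all _).smul ((IsSelfAdjoint.one _).add hg))
    (hag.trans (le_midpoint_one_mul_self hg))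

end CStarAlgebra

section Matrix

variable {n : ℕ} {A B : Matrix (Fin n) (Fin n) ℂ}

lemma loewnerLE_iff_le : loewnerLE A B ↔ A ≤ B :=
  Iff.rfl

lemma mrpow_eq_rpow (hA : A.PosSemidef) (r : ℝ) : mrpow A r = A ^ r := by
  rw [mrpow, dif_pos hA.1, rpow_eq_cfc_real (nonneg_iff_posSemidef.mpr hA), hA.1.cfc_eq,
    IsHermitian.cfc, Unitary.conjStarAlgAut_apply]
  rfl

lemma sharp_eq_geomMean (hA : A.PosDef) (hB : B.PosSemidef) : sharp A B = geomMean A B := by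
  have hM : (A ^ (-(1 / 2) : ℝ) * B * A ^ (-(1 / 2) : ℝ)).PosSemidef :=
    nonneg_iff_posSemidef.mp <|
      rpow_nonneg.isSelfAdjoint.conjugate_nonneg (nonneg_iff_posSemidef.mpr hB)
  rw [sharp, geomMean, mrpow_eq_rpow hA.posSemidef, mrpow_eq_rpow hA.posSemidef, mrpow_eq_rpow hM]

end Matrix

theorem wassersteinMean_inv_ge_one_of_loewnerLE_general {n : ℕ} (A B : Matrix (Fin n) (Fin n) ℂ)
    (hA : A.PosDef) (hAB : loewnerLE A B) :
    loewnerLE 1 (wassersteinMean (1/2) A⁻¹ B) := by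
  have ha : IsStrictlyPositive A := isStrictlyPositive_iff_posDef.mpr hA
  rw [loewnerLE_iff_le] at hAB ⊢
  rw [wassersteinMean, nonsing_inv_nonsing_inv A ((isUnit_iff_isUnit_det A).mp hA.isUnit),
    sharp_eq_geomMean hA (nonneg_iff_posSemidef.mp (ha.nonneg.trans hAB)),
    nonsing_inv_eq_ringInverse, show (1 - 1 / 2 : ℝ) = 1 / 2 by norm_num, ← smul_add]
  exact one_le_midpoint_mul_ringInverse_mul ha (le_geomMean_of_le ha hAB)

theorem wassersteinMean_inv_ge_one_of_loewnerLE {n : ℕ} (A B : Matrix (Fin n) (Fin n) ℂ)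
    (hA : A.PosDef) (hB : B.PosDef) (hAB : loewnerLE A B) :
    loewnerLE 1 (wassersteinMean (1/2) A⁻¹ B) :=
  wassersteinMean_inv_ge_one_of_loewnerLE_general A B hA hAB
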